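/- arXiv:2107.06194 — 4 statements merged into one kernel-verified Lean document; each statement's English description precedes it below -/
import Mathlib

section
/- Kantorovich inequality: Let T be an n×n real symmetric positive definite matrix (n ≥ 1) with smallest eigenvalue ρₙ and largest eigenvalue ρ₁. Then for every nonzero vector v ∈ ℝⁿ, (v'v)² / ((v'Tv)·(v'T⁻¹v)) ≥ 4ρ₁ρₙ/(ρ₁+ρₙ)². -/
open Matrix

/-! Diagonalising `T` by an orthogonal matrix turns `v'v`, `v'Tv` and `v'T⁻¹v` into weighted sums
`S = ∑ wᵢ`, `A = ∑ μᵢ wᵢ` and `B = ∑ μᵢ⁻¹ wᵢ` with weights `wᵢ ≥ 0` and eigenvalues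
`μᵢ ∈ [m, M]`. Since `(M - μ)(μ - m) ≥ 0`, every eigenvalue satisfies `μ + mM μ⁻¹ ≤ m + M`, hence
`A + mM B ≤ (m + M) S`, and AM–GM gives `4 mM A B ≤ (A + mM B)² ≤ (m + M)² S²`. -/

theorem add_mul_inv_le_add {m M x : ℝ} (hx : 0 < x) (hmx : m ≤ x) (hxM : x ≤ M) :
    x + m * M * x⁻¹ ≤ m + M := by
  have hquad : x * x + m * M ≤ (m + M) * x := by
    nlinarith [mul_nonneg (sub_nonneg.2 hxM) (sub_nonneg.2 hmx)]
  calc x + m * M * x⁻¹ = (x * x + m * M) / x := by field_simp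
    _ ≤ (m + M) * x / x := by gcongr
    _ = m + M := by field_simp

theorem Finset.kantorovich_inequality {ι : Type*} (s : Finset ι) (w μ : ι → ℝ) {m M : ℝ}
    (hm : 0 < m) (hw : ∀ i ∈ s, 0 ≤ w i) (hμ : ∀ i ∈ s, μ i ∈ Set.Icc m M) :
    4 * (m * M) * ((∑ i ∈ s, μ i * w i) * ∑ i ∈ s, (μ i)⁻¹ * w i) ≤
      ((m + M) * ∑ i ∈ s, w i) ^ 2 := by
  set A := ∑ i ∈ s, μ i * w i
  set B := ∑ i ∈ s, (μ i)⁻¹ * w i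
  have hAB : A + m * M * B = ∑ i ∈ s, (μ i + m * M * (μ i)⁻¹) * w i := by
    simp only [A, B, Finset.mul_sum, ← Finset.sum_add_distrib]
    exact Finset.sum_congr rfl fun _ _ => by ring
  have hμ_pos : ∀ i ∈ s, 0 < μ i := fun i hi => hm.trans_le (hμ i hi).1
  have hAB_nonneg : 0 ≤ A + m * M * B := by
    rw [hAB]
    refine Finset.sum_nonneg fun i hi => ?_
    have hμi : 0 < μ i := hμ_pos i hi
    have hM : 0 < M := hμi.trans_le (hμ i hi).2
    have hwi : 0 ≤ w i := hw i hi
    positivity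
  have hAB_le : A + m * M * B ≤ (m + M) * ∑ i ∈ s, w i := by
    rw [hAB, Finset.mul_sum]
    exact Finset.sum_le_sum fun i hi => mul_le_mul_of_nonneg_right
      (add_mul_inv_le_add (hμ_pos i hi) (hμ i hi).1 (hμ i hi).2) (hw i hi)
  calc 4 * (m * M) * (A * B) = 4 * A * (m * M * B) := by ring
    _ ≤ (A + m * M * B) ^ 2 := four_mul_le_sq_add _ _
    _ ≤ ((m + M) * ∑ i ∈ s, w i) ^ 2 := by gcongr

namespace Matrix

variable {n 𝕜 : Type*} [Fintype n] [DecidableEq n] [RCLike 𝕜]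

theorem IsHermitian.cfc_id {A : Matrix n n 𝕜} (hA : A.IsHermitian) : hA.cfc id = A :=
  hA.spectral_theorem.symm

theorem IsHermitian.cfc_one {A : Matrix n n 𝕜} (hA : A.IsHermitian) : hA.cfc 1 = 1 := by
  rw [← _root_.cfc_one ℝ A hA.isSelfAdjoint, hA.cfc_eq]

open scoped ComplexOrder in
theorem PosDef.inv_eq_cfc {A : Matrix n n 𝕜} (hA : A.PosDef) : A⁻¹ = hA.1.cfc (·⁻¹) := by
  rw [nonsing_inv_eq_ringInverse,
    ← cfc_ringInverse_id (R := ℝ) (a := A) hA.isUnit hA.1.isSelfAdjoint, hA.1.cfc_eq]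

theorem IsHermitian.dotProduct_cfc_mulVec {A : Matrix n n ℝ} (hA : A.IsHermitian) (f : ℝ → ℝ)
    (v : n → ℝ) :
    v ⬝ᵥ hA.cfc f *ᵥ v =
      ∑ i, f (hA.eigenvalues i) * ((hA.eigenvectorUnitary : Matrix n n ℝ)ᵀ *ᵥ v) i ^ 2 := by
  rw [IsHermitian.cfc, Unitary.conjStarAlgAut_apply, ← mulVec_mulVec, ← mulVec_mulVec,
    dotProduct_mulVec, ← mulVec_transpose, star_eq_conjTranspose,
    conjTranspose_eq_transpose_of_trivial]
  simp only [dotProduct, mulVec_diagonal, Function.comp_apply, RCLike.ofReal_real_eq_id, id]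
  exact Finset.sum_congr rfl fun _ _ => by ring

end Matrix

/-- Kantorovich inequality: for a symmetric positive definite `T` with largest eigenvalue `ρ1`
and smallest eigenvalue `ρn`, for every nonzero `v`,
`(v'v)² / ((v'Tv)·(v'T⁻¹v)) ≥ 4ρ1ρn/(ρ1+ρn)²`. -/
theorem kantorovich_inequality (n : ℕ)
    (T : Matrix (Fin n) (Fin n) ℝ) (hT : T.PosDef)
    (ρ1 ρn : ℝ)
    (hρ1 : IsGreatest (Set.range hT.1.eigenvalues) ρ1)
    (hρn : IsLeast (Set.range hT.1.eigenvalues) ρn)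
    (v : Fin n → ℝ) (hv : v ≠ 0) :
    (v ⬝ᵥ v) ^ 2 / ((v ⬝ᵥ T *ᵥ v) * (v ⬝ᵥ T⁻¹ *ᵥ v)) ≥ 4 * ρ1 * ρn / (ρ1 + ρn) ^ 2 := by
  set c := (hT.1.eigenvectorUnitary : Matrix (Fin n) (Fin n) ℝ)ᵀ *ᵥ v
  have hρn_pos : 0 < ρn := by
    obtain ⟨i, rfl⟩ := hρn.1
    exact hT.eigenvalues_pos i
  have hρ1_pos : 0 < ρ1 := hρn_pos.trans_le (hρn.2 hρ1.1)
  have hS : v ⬝ᵥ v = ∑ i, c i ^ 2 := by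
    simpa [hT.1.cfc_one] using hT.1.dotProduct_cfc_mulVec 1 v
  have hA : v ⬝ᵥ T *ᵥ v = ∑ i, hT.1.eigenvalues i * c i ^ 2 := by
    simpa [hT.1.cfc_id] using hT.1.dotProduct_cfc_mulVec id v
  have hB : v ⬝ᵥ T⁻¹ *ᵥ v = ∑ i, (hT.1.eigenvalues i)⁻¹ * c i ^ 2 := by
    rw [hT.inv_eq_cfc, hT.1.dotProduct_cfc_mulVec]
  have hAB_pos : 0 < (v ⬝ᵥ T *ᵥ v) * (v ⬝ᵥ T⁻¹ *ᵥ v) :=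
    mul_pos (hT.dotProduct_mulVec_pos hv) (hT.inv.dotProduct_mulVec_pos hv)
  have hkant := Finset.univ.kantorovich_inequality (fun i => c i ^ 2) hT.1.eigenvalues hρn_pos
    (fun _ _ => sq_nonneg _) fun i _ => ⟨hρn.2 ⟨i, rfl⟩, hρ1.2 ⟨i, rfl⟩⟩
  rw [ge_iff_le, div_le_div_iff₀ (by positivity) hAB_pos, hS, hA, hB]
  linear_combination hkant
end

section
/- Bauer–Householder inequality: Let T be an n×n real symmetric positive definite matrix with smallest eigenvalue ρₙ and largest eigenvalue ρ₁, and let ψ ∈ [0, π/2). Suppose p, q ∈ ℝⁿ are nonzero vectors with p'q/(|p|·|q|) ≥ cos ψ. Then (p'q)² / ((p'Tp)·(q'T⁻¹q)) ≥ 4/(κ_ψ + 2 + κ_ψ⁻¹), where κ_ψ = (ρ₁/ρₙ)·(1 + sin ψ)/(1 − sin ψ). -/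
open Matrix

set_option maxHeartbeats 1600000

/-- Bauer–Householder inequality: for a symmetric positive definite `T` with largest
eigenvalue `ρ1` and smallest eigenvalue `ρn`, `ψ ∈ [0, π/2)`, and nonzero `p, q` with
`p'q/(|p|·|q|) ≥ cos ψ`, we have `(p'q)² / ((p'Tp)·(q'T⁻¹q)) ≥ 4/(κψ + 2 + κψ⁻¹)`
where `κψ = (ρ1/ρn)·(1 + sin ψ)/(1 − sin ψ)`. -/
theorem bauer_householder_inequality (n : ℕ)
    (T : Matrix (Fin n) (Fin n) ℝ) (hT : T.PosDef)
    (ρ1 ρn : ℝ)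
    (hρ1 : IsGreatest (Set.range hT.1.eigenvalues) ρ1)
    (hρn : IsLeast (Set.range hT.1.eigenvalues) ρn)
    (ψ : ℝ) (hψ : ψ ∈ Set.Ico 0 (Real.pi / 2))
    (p q : Fin n → ℝ) (hp : p ≠ 0) (hq : q ≠ 0)
    (hangle : p ⬝ᵥ q / (Real.sqrt (p ⬝ᵥ p) * Real.sqrt (q ⬝ᵥ q)) ≥ Real.cos ψ) :
    (p ⬝ᵥ q) ^ 2 / ((p ⬝ᵥ T *ᵥ p) * (q ⬝ᵥ T⁻¹ *ᵥ q)) ≥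
      4 / (ρ1 / ρn * ((1 + Real.sin ψ) / (1 - Real.sin ψ)) + 2 +
        (ρ1 / ρn * ((1 + Real.sin ψ) / (1 - Real.sin ψ)))⁻¹) := by
  classical
  have hH : T.IsHermitian := hT.1
  set lam : Fin n → ℝ := hH.eigenvalues with hlam
  set U : Matrix (Fin n) (Fin n) ℝ := (hH.eigenvectorUnitary : Matrix (Fin n) (Fin n) ℝ) with hUdef
  have hU2 : U * star U = 1 := (Matrix.mem_unitaryGroup_iff).mp hH.eigenvectorUnitary.2
  have hU1 : star U * U = 1 := (Matrix.mem_unitaryGroup_iff').mp hH.eigenvectorUnitary.2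
  have hco : (RCLike.ofReal ∘ lam : Fin n → ℝ) = lam := by
    funext i; simp
  have hspec : T = U * diagonal lam * star U := by
    have := hH.spectral_theorem
    rwa [hco] at this
  -- eigencoordinates
  set x : Fin n → ℝ := star U *ᵥ p with hxdef
  set y : Fin n → ℝ := star U *ᵥ q with hydef
  have hpx : U *ᵥ x = p := by
    rw [hxdef, mulVec_mulVec, hU2, one_mulVec]
  have hqy : U *ᵥ y = q := by
    rw [hydef, mulVec_mulVec, hU2, one_mulVec]
  -- transfer of dot products
  have hdot : ∀ v z : Fin n → ℝ, (U *ᵥ v) ⬝ᵥ z = v ⬝ᵥ (star U *ᵥ z) := by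
    intro v z
    rw [dotProduct_comm, dotProduct_mulVec, star_eq_conjTranspose]
    have hUt : Uᴴ = Uᵀ := by ext i j; simp [conjTranspose_apply]
    rw [hUt, mulVec_transpose, dotProduct_comm]
  have hform : ∀ (v w : Fin n → ℝ) (d : Fin n → ℝ),
      (U *ᵥ v) ⬝ᵥ (U * diagonal d * star U) *ᵥ (U *ᵥ w) = ∑ i, d i * v i * w i := by
    intro v w d
    have h1 : (U * diagonal d * star U) *ᵥ (U *ᵥ w) = U *ᵥ (diagonal d *ᵥ w) := by
      rw [mulVec_mulVec, mul_assoc, mul_assoc, hU1, mul_one, ← mulVec_mulVec]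
    rw [h1, hdot, mulVec_mulVec, hU1, one_mulVec]
    simp [dotProduct, mulVec_diagonal]
    exact Finset.sum_congr rfl fun i _ => by ring
  have hinvT : T⁻¹ = U * diagonal (fun i => (lam i)⁻¹) * star U := by
    apply inv_eq_right_inv
    have hx0 : ∀ i, lam i ≠ 0 := fun i => (hT.eigenvalues_pos i).ne'
    calc T * (U * diagonal (fun i => (lam i)⁻¹) * star U)
        = U * (diagonal lam * (star U * U) * diagonal (fun i => (lam i)⁻¹)) * star U := by
          rw [hspec]; noncomm_ring
      _ = U * star U := by
          rw [hU1, mul_one, diagonal_mul_diagonal]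
          simp [hx0, mul_inv_cancel₀]
      _ = 1 := hU2
  -- all scalar quantities
  have hPq : p ⬝ᵥ q = ∑ i, x i * y i := by
    rw [← hpx, hdot, ← hydef]; simp [dotProduct]
  have hPp : p ⬝ᵥ p = ∑ i, x i ^ 2 := by
    rw [← hpx, hdot, mulVec_mulVec, hU1, one_mulVec]; simp [dotProduct, sq]
  have hQq : q ⬝ᵥ q = ∑ i, y i ^ 2 := by
    rw [← hqy, hdot, mulVec_mulVec, hU1, one_mulVec]; simp [dotProduct, sq]
  have haT : p ⬝ᵥ T *ᵥ p = ∑ i, lam i * x i ^ 2 := by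
    rw [← hpx, hspec, hform]
    exact Finset.sum_congr rfl fun i _ => by ring
  have hbT : q ⬝ᵥ T⁻¹ *ᵥ q = ∑ i, (lam i)⁻¹ * y i ^ 2 := by
    rw [← hqy, hinvT, hform]
    exact Finset.sum_congr rfl fun i _ => by ring
  -- eigenvalue bounds
  have hlampos : ∀ i, 0 < lam i := fun i => hT.eigenvalues_pos i
  have hlamub : ∀ i, lam i ≤ ρ1 := fun i => hρ1.2 ⟨i, rfl⟩
  have hlamlb : ∀ i, ρn ≤ lam i := fun i => hρn.2 ⟨i, rfl⟩
  have hρnpos : 0 < ρn := by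
    obtain ⟨i₀, hi₀⟩ := hρn.1
    rw [← hi₀]; exact hlampos i₀
  have hρ1n : ρn ≤ ρ1 := by
    obtain ⟨j, hj⟩ := hρ1.1
    rw [← hj]; exact hlamlb j
  have hρ1pos : 0 < ρ1 := lt_of_lt_of_le hρnpos hρ1n
  -- scalar quantities
  set Np := ∑ i, x i ^ 2 with hNpdef
  set Nq := ∑ i, y i ^ 2 with hNqdef
  set m := ∑ i, x i * y i with hmdef
  set a := ∑ i, lam i * x i ^ 2 with hadef
  set β := ∑ i, lam i * y i ^ 2 with hβdef
  set b := ∑ i, (lam i)⁻¹ * y i ^ 2 with hbdef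
  have hx0 : x ≠ 0 := fun h => hp (by rw [← hpx, h, mulVec_zero])
  have hy0 : y ≠ 0 := fun h => hq (by rw [← hqy, h, mulVec_zero])
  have hNp : 0 < Np := by
    obtain ⟨i, hi⟩ := Function.ne_iff.mp hx0
    exact Finset.sum_pos' (fun j _ => sq_nonneg _)
      ⟨i, Finset.mem_univ i, lt_of_le_of_ne (sq_nonneg _) (Ne.symm (pow_ne_zero 2 hi))⟩
  have hNq : 0 < Nq := by
    obtain ⟨i, hi⟩ := Function.ne_iff.mp hy0
    exact Finset.sum_pos' (fun j _ => sq_nonneg _)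
      ⟨i, Finset.mem_univ i, lt_of_le_of_ne (sq_nonneg _) (Ne.symm (pow_ne_zero 2 hi))⟩
  have hNN : 0 < Np * Nq := mul_pos hNp hNq
  have haln : ρn * Np ≤ a := by
    rw [hadef, hNpdef, Finset.mul_sum]
    exact Finset.sum_le_sum fun i _ => mul_le_mul_of_nonneg_right (hlamlb i) (sq_nonneg _)
  have hapos : 0 < a := lt_of_lt_of_le (mul_pos hρnpos hNp) haln
  have hbpos : 0 < b := by
    obtain ⟨i, hi⟩ := Function.ne_iff.mp hy0
    refine Finset.sum_pos' (fun j _ => mul_nonneg (inv_nonneg.mpr (hlampos j).le) (sq_nonneg _))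
      ⟨i, Finset.mem_univ i, mul_pos (inv_pos.mpr (hlampos i))
        (lt_of_le_of_ne (sq_nonneg _) (Ne.symm (pow_ne_zero 2 hi)))⟩
  -- the angle hypothesis
  have hcos : 0 < Real.cos ψ := Real.cos_pos_of_mem_Ioo ⟨by linarith [Real.pi_pos, hψ.1], hψ.2⟩
  have hsin0 : 0 ≤ Real.sin ψ :=
    Real.sin_nonneg_of_nonneg_of_le_pi hψ.1 (by linarith [Real.pi_pos, hψ.2])
  have hpyth : Real.sin ψ ^ 2 + Real.cos ψ ^ 2 = 1 := Real.sin_sq_add_cos_sq ψ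
  have hsin1 : Real.sin ψ < 1 := by
    rcases lt_or_eq_of_le (Real.sin_le_one ψ) with h | h
    · exact h
    · exfalso
      have h2 : Real.cos ψ ^ 2 = 0 := by rw [h] at hpyth; linarith only [hpyth]
      have hposc := pow_pos hcos 2
      rw [h2] at hposc
      exact lt_irrefl 0 hposc
  set tp := Real.sqrt Np with htpdef
  set tq := Real.sqrt Nq with htqdef
  have htp2 : tp ^ 2 = Np := Real.sq_sqrt hNp.le
  have htq2 : tq ^ 2 = Nq := Real.sq_sqrt hNq.le
  have htp : 0 < tp := Real.sqrt_pos.mpr hNp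
  have htq : 0 < tq := Real.sqrt_pos.mpr hNq
  rw [hPq, hPp, hQq] at hangle
  have hm : Real.cos ψ * (tp * tq) ≤ m := by
    rw [ge_iff_le, le_div_iff₀ (mul_pos htp htq)] at hangle
    exact hangle
  have hmpos : 0 < m := lt_of_lt_of_le (mul_pos hcos (mul_pos htp htq)) hm
  have hm2 : Real.cos ψ ^ 2 * (Np * Nq) ≤ m ^ 2 := by
    have h := mul_self_le_mul_self (mul_pos hcos (mul_pos htp htq)).le hm
    have he : Real.cos ψ ^ 2 * (Np * Nq) = (Real.cos ψ * (tp * tq)) * (Real.cos ψ * (tp * tq)) := by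
      rw [← htp2, ← htq2]; ring
    rw [he]
    calc (Real.cos ψ * (tp * tq)) * (Real.cos ψ * (tp * tq)) ≤ m * m := h
      _ = m ^ 2 := by ring
  -- spectral inequality (F1): ρ1 ρn b + β ≤ (ρ1+ρn) Nq
  have hF1 : ρ1 * ρn * b + β ≤ (ρ1 + ρn) * Nq := by
    rw [hbdef, hβdef, hNqdef, Finset.mul_sum, Finset.mul_sum, ← Finset.sum_add_distrib]
    refine Finset.sum_le_sum fun i _ => ?_
    have h0 : 0 < lam i := hlampos i
    have hz : 0 ≤ (lam i)⁻¹ * y i ^ 2 := mul_nonneg (inv_nonneg.mpr h0.le) (sq_nonneg _)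
    have hyz : lam i * ((lam i)⁻¹ * y i ^ 2) = y i ^ 2 := by
      field_simp
    have key : 0 ≤ (ρ1 - lam i) * (lam i - ρn) :=
      mul_nonneg (by linarith [hlamub i]) (by linarith [hlamlb i])
    have h3 : 0 ≤ ((ρ1 - lam i) * (lam i - ρn)) * ((lam i)⁻¹ * y i ^ 2) := mul_nonneg key hz
    have h4 : ((ρ1 - lam i) * (lam i - ρn)) * ((lam i)⁻¹ * y i ^ 2)
        = (ρ1 + ρn) * y i ^ 2 - ρ1 * ρn * ((lam i)⁻¹ * y i ^ 2) - lam i * y i ^ 2 := by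
      field_simp
      ring
    linarith only [h3, h4]
  -- Cauchy–Schwarz / Wielandt-type step
  set c := (ρ1 + ρn) / 2 with hcdef
  set u : Fin n → ℝ := fun i => tq * x i + tp * y i with hudef
  set w : Fin n → ℝ := fun i => tq * x i - tp * y i with hwdef
  have hS1 : ∑ i, lam i * (u i * w i) = a * Nq - β * Np := by
    have e : ∀ i ∈ Finset.univ, lam i * (u i * w i)
        = (lam i * x i ^ 2) * tq ^ 2 - (lam i * y i ^ 2) * tp ^ 2 := fun i _ => by
      simp only [hudef, hwdef]; ring
    rw [Finset.sum_congr rfl e, Finset.sum_sub_distrib, ← Finset.sum_mul, ← Finset.sum_mul,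
      ← hadef, ← hβdef, htp2, htq2]
  have hS2 : ∑ i, u i * w i = 0 := by
    have e : ∀ i ∈ Finset.univ, u i * w i
        = x i ^ 2 * tq ^ 2 - y i ^ 2 * tp ^ 2 := fun i _ => by
      simp only [hudef, hwdef]; ring
    rw [Finset.sum_congr rfl e, Finset.sum_sub_distrib, ← Finset.sum_mul, ← Finset.sum_mul,
      ← hNpdef, ← hNqdef, htp2, htq2]
    ring
  have hS3 : ∑ i, u i ^ 2 = 2 * (Np * Nq) + 2 * (tp * tq) * m := by
    have e : ∀ i ∈ Finset.univ, u i ^ 2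
        = x i ^ 2 * tq ^ 2 + y i ^ 2 * tp ^ 2 + (x i * y i) * (2 * (tp * tq)) := fun i _ => by
      simp only [hudef, hwdef]; ring
    rw [Finset.sum_congr rfl e, Finset.sum_add_distrib, Finset.sum_add_distrib,
      ← Finset.sum_mul, ← Finset.sum_mul, ← Finset.sum_mul,
      ← hNpdef, ← hNqdef, ← hmdef, htp2, htq2]
    ring
  have hS4 : ∑ i, w i ^ 2 = 2 * (Np * Nq) - 2 * (tp * tq) * m := by
    have e : ∀ i ∈ Finset.univ, w i ^ 2
        = x i ^ 2 * tq ^ 2 + y i ^ 2 * tp ^ 2 - (x i * y i) * (2 * (tp * tq)) := fun i _ => by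
      simp only [hudef, hwdef]; ring
    rw [Finset.sum_congr rfl e, Finset.sum_sub_distrib, Finset.sum_add_distrib,
      ← Finset.sum_mul, ← Finset.sum_mul, ← Finset.sum_mul,
      ← hNpdef, ← hNqdef, ← hmdef, htp2, htq2]
    ring
  have hG1 : ∑ i, ((lam i - c) * u i) * w i = a * Nq - β * Np := by
    have e : ∀ i ∈ Finset.univ, ((lam i - c) * u i) * w i
        = lam i * (u i * w i) - c * (u i * w i) := fun i _ => by ring
    rw [Finset.sum_congr rfl e, Finset.sum_sub_distrib, ← Finset.mul_sum, hS1, hS2,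
      mul_zero, sub_zero]
  have hCS : (∑ i, ((lam i - c) * u i) * w i) ^ 2
      ≤ (∑ i, ((lam i - c) * u i) ^ 2) * ∑ i, w i ^ 2 :=
    Finset.sum_mul_sq_le_sq_mul_sq _ _ _
  have hbound : ∑ i, ((lam i - c) * u i) ^ 2 ≤ ((ρ1 - ρn) / 2) ^ 2 * ∑ i, u i ^ 2 := by
    rw [Finset.mul_sum]
    refine Finset.sum_le_sum fun i _ => ?_
    have h1 : (lam i - c) ^ 2 ≤ ((ρ1 - ρn) / 2) ^ 2 := by
      apply sq_le_sq'
      · linarith only [hlamub i, hlamlb i, hcdef]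
      · linarith only [hlamub i, hlamlb i, hcdef]
    calc ((lam i - c) * u i) ^ 2 = (lam i - c) ^ 2 * u i ^ 2 := by ring
      _ ≤ ((ρ1 - ρn) / 2) ^ 2 * u i ^ 2 := mul_le_mul_of_nonneg_right h1 (sq_nonneg _)
  have hw2nn : 0 ≤ ∑ i, w i ^ 2 := Finset.sum_nonneg fun i _ => sq_nonneg _
  have htptq : (tp * tq) ^ 2 = Np * Nq := by rw [mul_pow, htp2, htq2]
  have hG2 : (a * Nq - β * Np) ^ 2 ≤ (ρ1 - ρn) ^ 2 * (Np * Nq) * (Np * Nq - m ^ 2) := by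
    have h1 : (a * Nq - β * Np) ^ 2 ≤ ((ρ1 - ρn) / 2) ^ 2 * ((∑ i, u i ^ 2) * (∑ i, w i ^ 2)) := by
      rw [← hG1]
      calc (∑ i, ((lam i - c) * u i) * w i) ^ 2
          ≤ (∑ i, ((lam i - c) * u i) ^ 2) * ∑ i, w i ^ 2 := hCS
        _ ≤ (((ρ1 - ρn) / 2) ^ 2 * ∑ i, u i ^ 2) * ∑ i, w i ^ 2 :=
            mul_le_mul_of_nonneg_right hbound hw2nn
        _ = ((ρ1 - ρn) / 2) ^ 2 * ((∑ i, u i ^ 2) * (∑ i, w i ^ 2)) := by ring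
    have h2 : (∑ i, u i ^ 2) * (∑ i, w i ^ 2) = 4 * (Np * Nq) * (Np * Nq - m ^ 2) := by
      rw [hS3, hS4]
      linear_combination (-4 * m ^ 2) * htptq
    rw [h2] at h1
    linarith only [h1]
  -- final scalar assembly
  set s := Real.sin ψ with hsdef
  set cψ := Real.cos ψ with hcψdef
  set κ := ρ1 / ρn * ((1 + s) / (1 - s)) with hκdef
  have h1s : 0 < 1 - s := by linarith
  have hκpos : 0 < κ :=
    mul_pos (div_pos hρ1pos hρnpos) (div_pos (by linarith) h1s)
  set E := κ + 2 + κ⁻¹ with hEdef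
  have hEpos : 0 < E := by
    have := inv_pos.mpr hκpos
    rw [hEdef]; linarith
  rw [hPq, haT, hbT, ge_iff_le, div_le_div_iff₀ hEpos (mul_pos hapos hbpos)]
  -- ⊢ 4 * (a * b) ≤ m ^ 2 * E
  have hstep1 : 4 * (a * b) * (ρ1 * ρn) * (Np * Nq)
      ≤ 4 * a * ((ρ1 + ρn) * Nq - β) * (Np * Nq) := by
    have hF1' : ρ1 * ρn * b ≤ (ρ1 + ρn) * Nq - β := by linarith only [hF1]
    have key := mul_le_mul_of_nonneg_left hF1'
      (mul_nonneg (mul_nonneg (by norm_num : (0:ℝ) ≤ 4) hapos.le) hNN.le)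
    calc 4 * (a * b) * (ρ1 * ρn) * (Np * Nq)
        = 4 * a * (Np * Nq) * (ρ1 * ρn * b) := by ring
      _ ≤ 4 * a * (Np * Nq) * ((ρ1 + ρn) * Nq - β) := key
      _ = 4 * a * ((ρ1 + ρn) * Nq - β) * (Np * Nq) := by ring
  have hstep2 : 4 * a * ((ρ1 + ρn) * Nq - β) * (Np * Nq)
      ≤ ((ρ1 + ρn) * (Np * Nq) + (a * Nq - β * Np)) ^ 2 := by
    linarith only [sq_nonneg (a * Nq - ((ρ1 + ρn) * (Np * Nq) - β * Np))]
  have hpyth' : s ^ 2 * (Np * Nq) + cψ ^ 2 * (Np * Nq) = Np * Nq := by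
    linear_combination (Np * Nq) * hpyth
  have hcc : Np * Nq - m ^ 2 ≤ s ^ 2 * (Np * Nq) := by
    linarith only [hm2, hpyth']
  have hG3 : (a * Nq - β * Np) ^ 2 ≤ ((ρ1 - ρn) * s * (Np * Nq)) ^ 2 := by
    have hmul := mul_le_mul_of_nonneg_left hcc
      (mul_nonneg (sq_nonneg (ρ1 - ρn)) hNN.le)
    calc (a * Nq - β * Np) ^ 2
        ≤ (ρ1 - ρn) ^ 2 * (Np * Nq) * (Np * Nq - m ^ 2) := hG2
      _ = (ρ1 - ρn) ^ 2 * (Np * Nq) * (Np * Nq - m ^ 2) := by ring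
      _ ≤ (ρ1 - ρn) ^ 2 * (Np * Nq) * (s ^ 2 * (Np * Nq)) := hmul
      _ = ((ρ1 - ρn) * s * (Np * Nq)) ^ 2 := by ring
  have hDqnn : 0 ≤ (ρ1 - ρn) * s * (Np * Nq) :=
    mul_nonneg (mul_nonneg (sub_nonneg.mpr hρ1n) hsin0) hNN.le
  obtain ⟨hge, hle⟩ := abs_le_of_sq_le_sq' hG3 hDqnn
  have hPNN : 0 ≤ (ρ1 + ρn) * (Np * Nq) := mul_nonneg (by linarith) hNN.le
  have hV : ((ρ1 + ρn) * (Np * Nq) + (a * Nq - β * Np)) ^ 2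
      ≤ (((ρ1 + ρn) + (ρ1 - ρn) * s) * (Np * Nq)) ^ 2 := by
    apply sq_le_sq'
    · linarith only [hge, hPNN]
    · linarith only [hle, hPNN]
  have h5 : 4 * (a * b) * (ρ1 * ρn) ≤ ((ρ1 + ρn) + (ρ1 - ρn) * s) ^ 2 * (Np * Nq) := by
    have hchain : 4 * (a * b) * (ρ1 * ρn) * (Np * Nq)
        ≤ (((ρ1 + ρn) + (ρ1 - ρn) * s) ^ 2 * (Np * Nq)) * (Np * Nq) := by
      calc 4 * (a * b) * (ρ1 * ρn) * (Np * Nq)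
          ≤ 4 * a * ((ρ1 + ρn) * Nq - β) * (Np * Nq) := hstep1
        _ ≤ ((ρ1 + ρn) * (Np * Nq) + (a * Nq - β * Np)) ^ 2 := hstep2
        _ ≤ (((ρ1 + ρn) + (ρ1 - ρn) * s) * (Np * Nq)) ^ 2 := hV
        _ = (((ρ1 + ρn) + (ρ1 - ρn) * s) ^ 2 * (Np * Nq)) * (Np * Nq) := by ring
    exact le_of_mul_le_mul_right hchain hNN
  have hc2 : cψ ^ 2 = 1 - s ^ 2 := by rw [hcψdef, hsdef]; linarith only [hpyth]
  have hid : cψ ^ 2 * E * (ρ1 * ρn) = ((ρ1 + ρn) + (ρ1 - ρn) * s) ^ 2 := by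
    rw [hc2, hEdef, hκdef]
    field_simp
    ring
  have h6 : cψ ^ 2 * (Np * Nq) * E ≤ m ^ 2 * E :=
    mul_le_mul_of_nonneg_right hm2 hEpos.le
  have hidNN : ((ρ1 + ρn) + (ρ1 - ρn) * s) ^ 2 * (Np * Nq)
      = (cψ ^ 2 * (Np * Nq) * E) * (ρ1 * ρn) := by
    linear_combination (Np * Nq) * hid.symm
  have h7 : 4 * (a * b) * (ρ1 * ρn) ≤ (m ^ 2 * E) * (ρ1 * ρn) := by
    calc 4 * (a * b) * (ρ1 * ρn)
        ≤ ((ρ1 + ρn) + (ρ1 - ρn) * s) ^ 2 * (Np * Nq) := h5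
      _ = (cψ ^ 2 * (Np * Nq) * E) * (ρ1 * ρn) := hidNN
      _ ≤ (m ^ 2 * E) * (ρ1 * ρn) :=
          mul_le_mul_of_nonneg_right h6 (mul_pos hρ1pos hρnpos).le
  exact le_of_mul_le_mul_right h7 (mul_pos hρ1pos hρnpos)
end

section
/- Gearing-constrained Sharpe ratio maximisation (optimisation VIII): Let Σ be an n×n real symmetric positive definite matrix, 1 ∈ ℝⁿ the all-ones vector, and α ∈ ℝⁿ nonzero with B = α'Σ⁻¹1 > 0, and let g₀ > 0. Set θ₈* = g₀·Σ⁻¹α/B. Then 1'θ₈* = g₀, θ₈* ≠ 0, and for every nonzero θ ∈ ℝⁿ with 1'θ = g₀ one has θ'α/√(θ'Σθ) ≤ θ₈*'α/√(θ₈*'Σθ₈*) = √C, where C = α'Σ⁻¹α; equality holds if and only if θ = θ₈*. -/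
/-!
With `w = Σ⁻¹α` one has `θ'α = θ'Σw` and `C = w'Σw`, so Cauchy–Schwarz for the inner product
`(x, y) ↦ x'Σy` bounds the Sharpe ratio of every portfolio by `√C`, with equality exactly on the
open ray through `w`. Since `1'w = B`, the gearing constraint `1'θ = g₀` meets that ray only in
`g₀ w / B = θ₈*`.
-/

open Matrix

theorem Matrix.IsSymm.dotProduct_mulVec_comm {ι R : Type*} [Fintype ι] [CommSemiring R]
    {M : Matrix ι ι R} (hM : M.IsSymm) (x y : ι → R) : x ⬝ᵥ M *ᵥ y = y ⬝ᵥ M *ᵥ x := by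
  rw [← dotProduct_transpose_mulVec, hM.eq]

theorem Matrix.PosDef.isSymm {ι : Type*} {M : Matrix ι ι ℝ} (hM : M.PosDef) : M.IsSymm :=
  isHermitian_iff_isSymm.mp hM.isHermitian

namespace Matrix.PosDef

variable {ι : Type*} [Fintype ι] {M : Matrix ι ι ℝ}

theorem sq_dotProduct_mulVec_le (hM : M.PosDef) (x y : ι → ℝ) :
    (x ⬝ᵥ M *ᵥ y) ^ 2 ≤ (x ⬝ᵥ M *ᵥ x) * (y ⬝ᵥ M *ᵥ y) := by
  classical
  have h := LinearMap.BilinForm.apply_sq_le_of_symm (toLinearMap₂' ℝ M) (fun z ↦ ?_)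
    ⟨fun x y ↦ ?_⟩ x y
  · simpa only [toLinearMap₂'_apply'] using h
  · rw [toLinearMap₂'_apply']
    exact hM.posSemidef.dotProduct_mulVec_nonneg z
  · rw [toLinearMap₂'_apply', toLinearMap₂'_apply']
    exact hM.isSymm.dotProduct_mulVec_comm x y

theorem smul_eq_smul_of_sq_dotProduct_mulVec_eq (hM : M.PosDef) {x y : ι → ℝ}
    (h : (x ⬝ᵥ M *ᵥ y) ^ 2 = (x ⬝ᵥ M *ᵥ x) * (y ⬝ᵥ M *ᵥ y)) :
    (y ⬝ᵥ M *ᵥ y) • x = (x ⬝ᵥ M *ᵥ y) • y := by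
  classical
  rw [hM.isSymm.dotProduct_mulVec_comm x y] at h ⊢
  set v := (y ⬝ᵥ M *ᵥ x) • y - (y ⬝ᵥ M *ᵥ y) • x
  have hv : v ⬝ᵥ M *ᵥ v = 0 := by
    have hexp := LinearMap.BilinForm.apply_smul_sub_smul_sub_eq (toLinearMap₂' ℝ M) y x
    simp only [toLinearMap₂'_apply'] at hexp
    rw [hexp, hM.isSymm.dotProduct_mulVec_comm x y]
    linear_combination (-(y ⬝ᵥ M *ᵥ y)) * h
  have hv0 : v = 0 := by
    by_contra hne
    simpa [hv] using hM.dotProduct_mulVec_pos hne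
  exact (sub_eq_zero.mp hv0).symm

theorem mulVec_inv_mulVec [DecidableEq ι] (hM : M.PosDef) (α : ι → ℝ) :
    M *ᵥ (M⁻¹ *ᵥ α) = α := by
  rw [mulVec_mulVec, mul_nonsing_inv M ((isUnit_iff_isUnit_det M).mp hM.isUnit), one_mulVec]

end Matrix.PosDef

section SharpeRatio

variable {ι : Type*} [Fintype ι]

/-- By the convention `x / 0 = 0`, the zero portfolio has Sharpe ratio `0`. -/
noncomputable def sharpeRatio (M : Matrix ι ι ℝ) (α θ : ι → ℝ) : ℝ :=
  θ ⬝ᵥ α / √(θ ⬝ᵥ M *ᵥ θ)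

theorem sharpeRatio_smul_of_pos (M : Matrix ι ι ℝ) (α θ : ι → ℝ) {c : ℝ} (hc : 0 < c) :
    sharpeRatio M α (c • θ) = sharpeRatio M α θ := by
  simp only [sharpeRatio, smul_dotProduct, mulVec_smul, dotProduct_smul, smul_eq_mul]
  rw [← mul_assoc, ← sq, Real.sqrt_mul (sq_nonneg c), Real.sqrt_sq hc.le,
    mul_div_mul_left _ _ hc.ne']

theorem sharpeRatio_mulVec_self (M : Matrix ι ι ℝ) (w : ι → ℝ) :
    sharpeRatio M (M *ᵥ w) w = √(w ⬝ᵥ M *ᵥ w) :=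
  Real.div_sqrt

variable {M : Matrix ι ι ℝ}

theorem sharpeRatio_mulVec_le (hM : M.PosDef) (w θ : ι → ℝ) :
    sharpeRatio M (M *ᵥ w) θ ≤ √(w ⬝ᵥ M *ᵥ w) := by
  refine div_le_of_le_mul₀ (Real.sqrt_nonneg _) (Real.sqrt_nonneg _) ?_
  calc θ ⬝ᵥ M *ᵥ w ≤ |θ ⬝ᵥ M *ᵥ w| := le_abs_self _
    _ ≤ √((w ⬝ᵥ M *ᵥ w) * (θ ⬝ᵥ M *ᵥ θ)) :=
      Real.abs_le_sqrt ((hM.sq_dotProduct_mulVec_le θ w).trans_eq (mul_comm _ _))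
    _ = √(w ⬝ᵥ M *ᵥ w) * √(θ ⬝ᵥ M *ᵥ θ) :=
      Real.sqrt_mul (hM.posSemidef.dotProduct_mulVec_nonneg w) _

theorem sharpeRatio_mulVec_eq_sqrt_iff (hM : M.PosDef) {w : ι → ℝ} (hw : w ≠ 0) {θ : ι → ℝ} :
    sharpeRatio M (M *ᵥ w) θ = √(w ⬝ᵥ M *ᵥ w) ↔ ∃ c : ℝ, 0 < c ∧ θ = c • w := by
  constructor
  · intro h
    have hC : 0 < w ⬝ᵥ M *ᵥ w := hM.dotProduct_mulVec_pos hw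
    have hθ : θ ≠ 0 := by
      rintro rfl
      simp only [sharpeRatio, zero_dotProduct, zero_div] at h
      exact (Real.sqrt_pos.mpr hC).ne h
    have hQ : 0 < θ ⬝ᵥ M *ᵥ θ := hM.dotProduct_mulVec_pos hθ
    have hP : θ ⬝ᵥ M *ᵥ w = √(w ⬝ᵥ M *ᵥ w) * √(θ ⬝ᵥ M *ᵥ θ) :=
      (div_eq_iff (Real.sqrt_pos.mpr hQ).ne').mp h
    have hsq : (θ ⬝ᵥ M *ᵥ w) ^ 2 = (θ ⬝ᵥ M *ᵥ θ) * (w ⬝ᵥ M *ᵥ w) := by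
      rw [hP, mul_pow, Real.sq_sqrt hC.le, Real.sq_sqrt hQ.le, mul_comm]
    refine ⟨(θ ⬝ᵥ M *ᵥ w) / (w ⬝ᵥ M *ᵥ w), div_pos (hP ▸ by positivity) hC, ?_⟩
    rw [div_eq_inv_mul, mul_smul, ← hM.smul_eq_smul_of_sq_dotProduct_mulVec_eq hsq, smul_smul,
      inv_mul_cancel₀ hC.ne', one_smul]
  · rintro ⟨c, hc, rfl⟩
    rw [sharpeRatio_smul_of_pos _ _ _ hc, sharpeRatio_mulVec_self]

end SharpeRatio

theorem gearing_constrained_sharpe_max_general (n : ℕ)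
    (M : Matrix (Fin n) (Fin n) ℝ) (hM : M.PosDef)
    (α : Fin n → ℝ)
    (B C : ℝ)
    (hB : B = α ⬝ᵥ M⁻¹ *ᵥ (1 : Fin n → ℝ)) (hBpos : 0 < B)
    (hC : C = α ⬝ᵥ M⁻¹ *ᵥ α)
    (g₀ : ℝ) (hg₀ : 0 < g₀)
    (θ₈ : Fin n → ℝ) (hθ₈ : θ₈ = (g₀ / B) • (M⁻¹ *ᵥ α)) :
    (1 : Fin n → ℝ) ⬝ᵥ θ₈ = g₀ ∧ θ₈ ≠ 0 ∧
    θ₈ ⬝ᵥ α / Real.sqrt (θ₈ ⬝ᵥ M *ᵥ θ₈) = Real.sqrt C ∧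
    ∀ θ : Fin n → ℝ, θ ≠ 0 → (1 : Fin n → ℝ) ⬝ᵥ θ = g₀ →
      θ ⬝ᵥ α / Real.sqrt (θ ⬝ᵥ M *ᵥ θ) ≤ Real.sqrt C ∧
      (θ ⬝ᵥ α / Real.sqrt (θ ⬝ᵥ M *ᵥ θ) = Real.sqrt C ↔ θ = θ₈) := by
  set w := M⁻¹ *ᵥ α
  have hMw : M *ᵥ w = α := hM.mulVec_inv_mulVec α
  have hBw : (1 : Fin n → ℝ) ⬝ᵥ w = B := by rw [hB, hM.inv.isSymm.dotProduct_mulVec_comm]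
  have hCw : C = w ⬝ᵥ M *ᵥ w := by rw [hC, hMw, dotProduct_comm]
  have hw : w ≠ 0 := by
    rintro hw
    rw [hw, dotProduct_zero] at hBw
    exact hBpos.ne hBw
  have hmax (θ : Fin n → ℝ) : sharpeRatio M α θ = √C ↔ ∃ c : ℝ, 0 < c ∧ θ = c • w := by
    rw [hCw, ← hMw]
    exact sharpeRatio_mulVec_eq_sqrt_iff hM hw
  have hθ₈ray : ∃ c : ℝ, 0 < c ∧ θ₈ = c • w := ⟨g₀ / B, div_pos hg₀ hBpos, hθ₈⟩
  refine ⟨?_, ?_, (hmax θ₈).mpr hθ₈ray, fun θ _ hθ => ⟨?_, (hmax θ).trans ⟨?_, ?_⟩⟩⟩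
  · rw [hθ₈, dotProduct_smul, hBw, smul_eq_mul, div_mul_cancel₀ _ hBpos.ne']
  · rw [hθ₈]
    exact smul_ne_zero (div_pos hg₀ hBpos).ne' hw
  · rw [hCw, ← hMw]
    exact sharpeRatio_mulVec_le hM w θ
  · rintro ⟨c, -, rfl⟩
    rw [dotProduct_smul, hBw, smul_eq_mul] at hθ
    rw [hθ₈, ← hθ, mul_div_cancel_right₀ _ hBpos.ne']
  · rintro rfl
    exact hθ₈ray

/-- Gearing-constrained Sharpe ratio maximisation (optimisation VIII): with `B = α'Σ⁻¹1 > 0`,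
`C = α'Σ⁻¹α`, `g₀ > 0` and `θ₈* = g₀·Σ⁻¹α/B`, we have `1'θ₈* = g₀`, `θ₈* ≠ 0`, and every
nonzero `θ` with `1'θ = g₀` satisfies `θ'α/√(θ'Σθ) ≤ θ₈*'α/√(θ₈*'Σθ₈*) = √C`, with
equality iff `θ = θ₈*`. -/
theorem gearing_constrained_sharpe_max (n : ℕ)
    (M : Matrix (Fin n) (Fin n) ℝ) (hM : M.PosDef)
    (α : Fin n → ℝ) (hα : α ≠ 0)
    (B C : ℝ)
    (hB : B = α ⬝ᵥ M⁻¹ *ᵥ (1 : Fin n → ℝ)) (hBpos : 0 < B)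
    (hC : C = α ⬝ᵥ M⁻¹ *ᵥ α)
    (g₀ : ℝ) (hg₀ : 0 < g₀)
    (θ₈ : Fin n → ℝ) (hθ₈ : θ₈ = (g₀ / B) • (M⁻¹ *ᵥ α)) :
    (1 : Fin n → ℝ) ⬝ᵥ θ₈ = g₀ ∧ θ₈ ≠ 0 ∧
    θ₈ ⬝ᵥ α / Real.sqrt (θ₈ ⬝ᵥ M *ᵥ θ₈) = Real.sqrt C ∧
    ∀ θ : Fin n → ℝ, θ ≠ 0 → (1 : Fin n → ℝ) ⬝ᵥ θ = g₀ →
      θ ⬝ᵥ α / Real.sqrt (θ ⬝ᵥ M *ᵥ θ) ≤ Real.sqrt C ∧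
      (θ ⬝ᵥ α / Real.sqrt (θ ⬝ᵥ M *ᵥ θ) = Real.sqrt C ↔ θ = θ₈) :=
  gearing_constrained_sharpe_max_general n M hM α B C hB hBpos hC g₀ hg₀ θ₈ hθ₈
end

section
/- Equality case of the constrained bound: Let Σ be an n×n real symmetric positive definite matrix with eigenvalues ρ₁ > ρₙ > 0 and corresponding orthonormal eigenvectors q₁ and qₙ (so Σq₁ = ρ₁q₁, Σqₙ = ρₙqₙ, |q₁| = |qₙ| = 1, q₁'qₙ = 0). Let ψ ∈ [0, π/2) and set η = (1 + sin ψ)/(1 − sin ψ) and κ_ψ = (ρ₁/ρₙ)·η. Then for α = √(η·ρ₁)·q₁ + √ρₙ·qₙ and θ = q₁/√(η·ρ₁) + qₙ/√ρₙ, one has α'θ/(|α|·|θ|) = 2√κ_ψ/(κ_ψ+1), so the Bauer–Householder lower bound on the α-weight angle cosine is attained. -/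
open Matrix

/-- Equality case of the constrained bound: for `Σ` symmetric positive definite with
eigenvalues `ρ1 > ρn > 0` and orthonormal eigenvectors `q1, qn`, `ψ ∈ [0, π/2)`,
`η = (1+sin ψ)/(1−sin ψ)` and `κψ = (ρ1/ρn)·η`, for `α = √(η·ρ1)·q1 + √ρn·qn` and
`θ = q1/√(η·ρ1) + qn/√ρn` we have `α'θ/(|α|·|θ|) = 2√κψ/(κψ+1)`, so the
Bauer–Householder lower bound on the α-weight angle cosine is attained. -/
theorem constrained_bound_equality_case (n : ℕ)
    (M : Matrix (Fin n) (Fin n) ℝ) (hM : M.PosDef)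
    (ρ1 ρn : ℝ) (hρn : 0 < ρn) (hρ : ρn < ρ1)
    (q1 qn : Fin n → ℝ)
    (hq1 : M *ᵥ q1 = ρ1 • q1) (hqn : M *ᵥ qn = ρn • qn)
    (hq1norm : q1 ⬝ᵥ q1 = 1) (hqnnorm : qn ⬝ᵥ qn = 1) (horth : q1 ⬝ᵥ qn = 0)
    (ψ : ℝ) (hψ : ψ ∈ Set.Ico 0 (Real.pi / 2))
    (η κψ : ℝ) (hη : η = (1 + Real.sin ψ) / (1 - Real.sin ψ)) (hκψ : κψ = ρ1 / ρn * η)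
    (α θ : Fin n → ℝ)
    (hα : α = Real.sqrt (η * ρ1) • q1 + Real.sqrt ρn • qn)
    (hθ : θ = (Real.sqrt (η * ρ1))⁻¹ • q1 + (Real.sqrt ρn)⁻¹ • qn) :
    α ⬝ᵥ θ / (Real.sqrt (α ⬝ᵥ α) * Real.sqrt (θ ⬝ᵥ θ)) =
      2 * Real.sqrt κψ / (κψ + 1) := by
  have hρ1 : (0:ℝ) < ρ1 := hρn.trans hρ
  obtain ⟨hψ0, hψlt⟩ := hψ
  have hs0 : 0 ≤ Real.sin ψ := Real.sin_nonneg_of_nonneg_of_le_pi hψ0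
    (le_trans hψlt.le (by linarith [Real.pi_pos]))
  have hs1 : Real.sin ψ < 1 := by
    have h := Real.sin_lt_sin_of_lt_of_le_pi_div_two
      (by linarith [Real.pi_pos] : -(Real.pi/2) ≤ ψ) le_rfl hψlt
    rwa [Real.sin_pi_div_two] at h
  have hηpos : 0 < η := by rw [hη]; exact div_pos (by linarith) (by linarith)
  have ha : 0 < η * ρ1 := by positivity
  have horth' : qn ⬝ᵥ q1 = 0 := by rw [dotProduct_comm]; exact horth
  have hsa : Real.sqrt (η * ρ1) * Real.sqrt (η * ρ1) = η * ρ1 := Real.mul_self_sqrt ha.le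
  have hsb : Real.sqrt ρn * Real.sqrt ρn = ρn := Real.mul_self_sqrt hρn.le
  have hsapos : 0 < Real.sqrt (η * ρ1) := Real.sqrt_pos.mpr ha
  have hsbpos : 0 < Real.sqrt ρn := Real.sqrt_pos.mpr hρn
  have hαθ : α ⬝ᵥ θ = 2 := by
    simp [hα, hθ, dotProduct_add, add_dotProduct, dotProduct_smul, smul_dotProduct,
      hq1norm, hqnnorm, horth, horth']
    rw [inv_mul_cancel₀ hsapos.ne', inv_mul_cancel₀ hsbpos.ne']; norm_num
  have hαα : α ⬝ᵥ α = η * ρ1 + ρn := by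
    simp [hα, dotProduct_add, add_dotProduct, dotProduct_smul, smul_dotProduct,
      hq1norm, hqnnorm, horth, horth']
    rw [hsa, hsb]
  have hθθ : θ ⬝ᵥ θ = (η * ρ1)⁻¹ + ρn⁻¹ := by
    simp [hθ, dotProduct_add, add_dotProduct, dotProduct_smul, smul_dotProduct,
      hq1norm, hqnnorm, horth, horth']
    rw [← mul_inv, ← mul_inv, hsa, hsb]; ring
  rw [hαθ, hαα, hθθ, ← Real.sqrt_mul (by positivity)]
  have key : (η * ρ1 + ρn) * ((η * ρ1)⁻¹ + ρn⁻¹) = (η * ρ1 + ρn)^2 / (η * ρ1 * ρn) := by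
    field_simp; ring
  rw [key]
  have hsum : 0 < η * ρ1 + ρn := by positivity
  have hP : 0 < η * ρ1 * ρn := by positivity
  have hκ : κψ = (η * ρ1 * ρn) / ρn ^ 2 := by rw [hκψ]; field_simp
  have hsκ : Real.sqrt κψ = Real.sqrt (η * ρ1 * ρn) / ρn := by
    rw [hκ, Real.sqrt_div hP.le, Real.sqrt_sq hρn.le]
  have hsP : Real.sqrt (η * ρ1 * ρn) * Real.sqrt (η * ρ1 * ρn) = η * ρ1 * ρn :=
    Real.mul_self_sqrt hP.le
  have hsPpos : 0 < Real.sqrt (η * ρ1 * ρn) := Real.sqrt_pos.mpr hP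
  rw [Real.sqrt_div (sq_nonneg _), Real.sqrt_sq hsum.le, hsκ, hκ]
  field_simp
end
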